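/- arXiv:2010.05899 — 5 statements merged into one kernel-verified Lean document; each statement's English description precedes it below -/
import Mathlib

section
/- Let f be a centered Gaussian random vector in ℝ^l with positive semidefinite covariance matrix Σ₀, let α₀ > 0, and set Σ = α₀I + Σ₀. Then for any δ ∈ (0, 1), with probability at least 1 − δ the random matrix inequality ffᵀ ⪯ (2l + 4 log(1/δ)) · Σ holds in the Loewner (positive semidefinite) order. Moreover, if Σ₀ is invertible the same conclusion holds with α₀ = 0, i.e. with Σ = Σ₀. -/
/-!
Let `M` be positive definite with `Σ₀ ⪯ M` and write `M = Bᵀ B`. For `y = (Bᵀ)⁻¹ x` the event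
`c • M - x xᵀ ⪰ 0` contains `‖y‖² ≤ c`, and every projection `⟪b, y⟫` is Gaussian with variance
at most `‖b‖²`. Averaging `exp ⟪g, y⟫` over an independent `g ~ N(0, I/2)` gives `exp (‖y‖² / 4)`,
so exchanging the two integrals bounds `E exp (‖y‖² / 4)` by `E exp (‖g‖² / 2) = 2 ^ (l / 2)`, and
Markov's inequality at level `c = 2 l + 4 log (1 / δ)` leaves probability at most `δ` outside the
event.
-/

open Matrix MeasureTheory ProbabilityTheory Real
open scoped ENNReal NNReal

lemma lintegral_exp_mul_gaussianReal (μ : ℝ) (v : ℝ≥0) (c : ℝ) :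
    ∫⁻ t, ENNReal.ofReal (exp (c * t)) ∂gaussianReal μ v =
      ENNReal.ofReal (exp (μ * c + v * c ^ 2 / 2)) := by
  rw [← ofReal_integral_eq_lintegral_ofReal (integrable_exp_mul_gaussianReal c)
    (ae_of_all _ fun _ => (exp_pos _).le)]
  exact congrArg ENNReal.ofReal (congrFun mgf_id_gaussianReal c)

lemma gaussianPDFReal_half_mul_exp (t : ℝ) :
    gaussianPDFReal 0 (1 / 2) t * exp (t ^ 2 / 2) = √2 * gaussianPDFReal 0 1 t := by
  simp only [gaussianPDFReal, NNReal.coe_one, sub_zero]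
  rw [show (((1 / 2 : ℝ≥0)) : ℝ) = 1 / 2 by norm_num, mul_assoc, ← exp_add,
    show -t ^ 2 / (2 * (1 / 2)) + t ^ 2 / 2 = -t ^ 2 / (2 * 1) by ring,
    show 2 * π * (1 / 2) = π by ring, mul_one (2 * π), sqrt_mul zero_le_two, mul_inv, ← mul_assoc,
    mul_inv_cancel_left₀ (by positivity)]

lemma lintegral_exp_sq_div_two_gaussianReal_half :
    ∫⁻ t, ENNReal.ofReal (exp (t ^ 2 / 2)) ∂gaussianReal 0 (1 / 2) = ENNReal.ofReal √2 := by
  rw [gaussianReal_of_var_ne_zero _ (by norm_num),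
    lintegral_withDensity_eq_lintegral_mul _ (measurable_gaussianPDF _ _) (by fun_prop)]
  simp only [Pi.mul_apply, gaussianPDF, ← ENNReal.ofReal_mul (gaussianPDFReal_nonneg _ _ _),
    gaussianPDFReal_half_mul_exp, ENNReal.ofReal_mul (sqrt_nonneg 2)]
  rw [lintegral_const_mul _ (measurable_gaussianPDFReal 0 1).ennreal_ofReal,
    lintegral_gaussianPDFReal_eq_one _ one_ne_zero, mul_one]

variable {ι : Type*} [Fintype ι]

lemma lintegral_ofReal_exp_sum_pi (μ : ι → Measure ℝ)
    [∀ i, IsProbabilityMeasure (μ i)] {f : ι → ℝ → ℝ} (hf : ∀ i, Measurable (f i)) :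
    ∫⁻ x, ENNReal.ofReal (exp (∑ i, f i (x i))) ∂Measure.pi μ =
      ∏ i, ∫⁻ t, ENNReal.ofReal (exp (f i t)) ∂μ i := by
  simp_rw [exp_sum, ENNReal.ofReal_prod_of_nonneg fun i _ => (exp_pos _).le]
  rw [lintegral_prod_eq_prod_lintegral_of_indepFun _ _
    (iIndepFun_pi fun i => ((hf i).exp.ennreal_ofReal).aemeasurable) fun i => by fun_prop]
  exact Finset.prod_congr rfl fun i _ =>
    (measurePreserving_eval μ i).lintegral_comp (hf i).exp.ennreal_ofReal

lemma lintegral_exp_dotProduct_pi_gaussianReal (v : ℝ≥0) (y : ι → ℝ) :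
    ∫⁻ g, ENNReal.ofReal (exp (g ⬝ᵥ y)) ∂Measure.pi (fun _ : ι => gaussianReal 0 v) =
      ENNReal.ofReal (exp (v * (y ⬝ᵥ y) / 2)) := by
  simp_rw [dotProduct, mul_comm _ (y _)]
  rw [lintegral_ofReal_exp_sum_pi _ fun i => by fun_prop]
  simp_rw [lintegral_exp_mul_gaussianReal, zero_mul, zero_add, Finset.mul_sum, Finset.sum_div,
    exp_sum, ENNReal.ofReal_prod_of_nonneg fun i _ => (exp_pos _).le, sq]

lemma lintegral_exp_dotProduct_self_pi_gaussianReal_half :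
    ∫⁻ g, ENNReal.ofReal (exp (g ⬝ᵥ g / 2)) ∂Measure.pi (fun _ : ι => gaussianReal 0 (1 / 2)) =
      ENNReal.ofReal √2 ^ Fintype.card ι := by
  simp_rw [dotProduct, Finset.sum_div, ← sq]
  rw [lintegral_ofReal_exp_sum_pi _ (f := fun _ t => t ^ 2 / 2) fun _ => by fun_prop]
  simp only [lintegral_exp_sq_div_two_gaussianReal_half, Finset.prod_const, Finset.card_univ]

lemma lintegral_exp_dotProduct_self_div_four_le {μ : Measure (ι → ℝ)} [SFinite μ]
    (hμ : ∀ b, ∫⁻ y, ENNReal.ofReal (exp (b ⬝ᵥ y)) ∂μ ≤ ENNReal.ofReal (exp (b ⬝ᵥ b / 2))) :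
    ∫⁻ y, ENNReal.ofReal (exp (y ⬝ᵥ y / 4)) ∂μ ≤ ENNReal.ofReal √2 ^ Fintype.card ι := by
  let γ := Measure.pi fun _ : ι => gaussianReal 0 (1 / 2)
  have decouple (y : ι → ℝ) :
      ENNReal.ofReal (exp (y ⬝ᵥ y / 4)) = ∫⁻ g, ENNReal.ofReal (exp (g ⬝ᵥ y)) ∂γ := by
    rw [lintegral_exp_dotProduct_pi_gaussianReal]
    congr 2
    push_cast
    ring
  calc ∫⁻ y, ENNReal.ofReal (exp (y ⬝ᵥ y / 4)) ∂μ
      = ∫⁻ g, ∫⁻ y, ENNReal.ofReal (exp (g ⬝ᵥ y)) ∂μ ∂γ := by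
        simp_rw [decouple]
        exact lintegral_lintegral_swap (by fun_prop)
    _ ≤ ∫⁻ g, ENNReal.ofReal (exp (g ⬝ᵥ g / 2)) ∂γ := lintegral_mono hμ
    _ = ENNReal.ofReal √2 ^ Fintype.card ι := lintegral_exp_dotProduct_self_pi_gaussianReal_half

lemma sqrt_two_pow_div_exp_le {n : ℕ} {δ : ℝ} (hδ : 0 < δ) :
    √2 ^ n / exp ((2 * n + 4 * log (1 / δ)) / 4) ≤ δ := by
  have hsqrt : √2 ≤ exp (1 / 2) := by
    rw [exp_half]
    exact sqrt_le_sqrt (by linarith [add_one_le_exp (1 : ℝ)])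
  have hexp : exp ((2 * n + 4 * log (1 / δ)) / 4) = exp (1 / 2) ^ n / δ := by
    rw [show (2 * n + 4 * log (1 / δ)) / 4 = n * (1 / 2) + log (1 / δ) by ring, exp_add,
      exp_nat_mul, exp_log (by positivity)]
    ring
  rw [hexp, div_le_iff₀ (by positivity), mul_div_cancel₀ _ hδ.ne']
  exact pow_le_pow_left₀ (sqrt_nonneg 2) hsqrt n

lemma le_measure_dotProduct_self_le {μ : Measure (ι → ℝ)} [IsProbabilityMeasure μ]
    (hμ : ∀ b, ∫⁻ y, ENNReal.ofReal (exp (b ⬝ᵥ y)) ∂μ ≤ ENNReal.ofReal (exp (b ⬝ᵥ b / 2)))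
    {δ : ℝ} (hδ : 0 < δ) :
    ENNReal.ofReal (1 - δ) ≤ μ {y | y ⬝ᵥ y ≤ 2 * Fintype.card ι + 4 * log (1 / δ)} := by
  set c := 2 * (Fintype.card ι : ℝ) + 4 * log (1 / δ)
  have tail : μ {y | c < y ⬝ᵥ y} ≤ ENNReal.ofReal δ :=
    calc μ {y | c < y ⬝ᵥ y}
        ≤ μ {y | ENNReal.ofReal (exp (c / 4)) ≤ ENNReal.ofReal (exp (y ⬝ᵥ y / 4))} :=
          measure_mono fun y hy =>
            ENNReal.ofReal_le_ofReal <| exp_le_exp.2 <| div_le_div_of_nonneg_right hy.le zero_le_four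
      _ ≤ (∫⁻ y, ENNReal.ofReal (exp (y ⬝ᵥ y / 4)) ∂μ) / ENNReal.ofReal (exp (c / 4)) :=
          meas_ge_le_lintegral_div (by fun_prop) (by simp [exp_pos]) ENNReal.ofReal_ne_top
      _ ≤ ENNReal.ofReal √2 ^ Fintype.card ι / ENNReal.ofReal (exp (c / 4)) :=
          ENNReal.div_le_div_right (lintegral_exp_dotProduct_self_div_four_le hμ) _
      _ ≤ ENNReal.ofReal δ := by
          rw [← ENNReal.ofReal_pow (sqrt_nonneg 2), ← ENNReal.ofReal_div_of_pos (exp_pos _)]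
          exact ENNReal.ofReal_le_ofReal (sqrt_two_pow_div_exp_le hδ)
  have hcompl : {y : ι → ℝ | y ⬝ᵥ y ≤ c} = {y | c < y ⬝ᵥ y}ᶜ := by ext; simp
  rw [hcompl, prob_compl_eq_one_sub (measurableSet_lt measurable_const (by fun_prop)),
    ENNReal.ofReal_sub _ hδ.le, ENNReal.ofReal_one]
  exact tsub_le_tsub_left tail 1

variable [DecidableEq ι]

lemma posSemidef_smul_one_sub_vecMulVec {y : ι → ℝ} {c : ℝ} (hy : y ⬝ᵥ y ≤ c) :
    (c • (1 : Matrix ι ι ℝ) - vecMulVec y y).PosSemidef := by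
  refine .of_dotProduct_mulVec_nonneg ?_ fun a => ?_
  · simp [IsHermitian]
  · have cauchySchwarz : (y ⬝ᵥ a) ^ 2 ≤ (y ⬝ᵥ y) * (a ⬝ᵥ a) := by
      simpa only [dotProduct, sq] using Finset.sum_mul_sq_le_sq_mul_sq Finset.univ y a
    have ha : 0 ≤ a ⬝ᵥ a := Finset.sum_nonneg fun i _ => mul_self_nonneg (a i)
    simp only [star_trivial, sub_mulVec, smul_mulVec, one_mulVec, vecMulVec_mulVec, dotProduct_sub,
      dotProduct_smul, smul_eq_mul, op_smul_eq_mul, dotProduct_comm a y]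
    nlinarith

lemma posSemidef_smul_transpose_mul_self_sub_vecMulVec (B : Matrix ι ι ℝ) {y : ι → ℝ} {c : ℝ}
    (hy : y ⬝ᵥ y ≤ c) : (c • (Bᵀ * B) - vecMulVec (Bᵀ *ᵥ y) (Bᵀ *ᵥ y)).PosSemidef := by
  have h := (posSemidef_smul_one_sub_vecMulVec hy).conjTranspose_mul_mul_same B
  rwa [conjTranspose_eq_transpose_of_trivial, Matrix.mul_sub, Matrix.sub_mul, mul_smul_comm,
    mul_one, smul_mul_assoc, mul_vecMulVec, vecMulVec_mul, ← mulVec_transpose] at h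

open scoped MatrixOrder in
lemma Matrix.PosDef.exists_isUnit_eq_transpose_mul_self {M : Matrix ι ι ℝ} (hM : M.PosDef) :
    ∃ B : Matrix ι ι ℝ, IsUnit B ∧ M = Bᵀ * B := by
  obtain ⟨B, hB⟩ := CStarAlgebra.nonneg_iff_eq_star_mul_self.1 hM.posSemidef.nonneg
  rw [star_eq_conjTranspose, conjTranspose_eq_transpose_of_trivial] at hB
  exact ⟨B, isUnit_of_mul_isUnit_right (hB ▸ hM.isUnit), hB⟩

lemma lintegral_exp_dotProduct_map_mulVec_le {Cov : Matrix ι ι ℝ} {ν : Measure (ι → ℝ)}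
    (hν : ∀ a : ι → ℝ,
      Measure.map (fun x => ∑ i, a i * x i) ν = gaussianReal 0 (Real.toNNReal (a ⬝ᵥ Cov *ᵥ a)))
    {W : Matrix ι ι ℝ} (hW : (1 - Wᵀ * Cov * W).PosSemidef) (b : ι → ℝ) :
    ∫⁻ y, ENNReal.ofReal (exp (b ⬝ᵥ y)) ∂ν.map (Wᵀ *ᵥ ·) ≤ ENNReal.ofReal (exp (b ⬝ᵥ b / 2)) := by
  have hproj (x : ι → ℝ) : b ⬝ᵥ (Wᵀ *ᵥ x) = ∑ i, (W *ᵥ b) i * x i := by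
    rw [dotProduct_mulVec, vecMul_transpose]; rfl
  have hvar : (W *ᵥ b) ⬝ᵥ Cov *ᵥ (W *ᵥ b) ≤ b ⬝ᵥ b := by
    have := hW.dotProduct_mulVec_nonneg b
    rwa [star_trivial, sub_mulVec, one_mulVec, dotProduct_sub, ← mulVec_mulVec, ← mulVec_mulVec,
      dotProduct_mulVec b Wᵀ, vecMul_transpose, sub_nonneg] at this
  have hmgf := lintegral_exp_mul_gaussianReal 0 (Real.toNNReal ((W *ᵥ b) ⬝ᵥ Cov *ᵥ (W *ᵥ b))) 1
  simp only [one_mul, zero_add, one_pow, mul_one] at hmgf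
  rw [lintegral_map (by fun_prop) (by fun_prop)]
  simp_rw [hproj]
  rw [← lintegral_map (f := fun t => ENNReal.ofReal (exp t)) (by fun_prop) (by fun_prop), hν, hmgf]
  refine ENNReal.ofReal_le_ofReal (exp_le_exp.2 (div_le_div_of_nonneg_right ?_ zero_le_two))
  exact Real.coe_toNNReal' _ ▸ max_le hvar (Finset.sum_nonneg fun i _ => mul_self_nonneg (b i))

theorem le_measure_smul_sub_vecMulVec_posSemidef {Cov M : Matrix ι ι ℝ} {ν : Measure (ι → ℝ)}
    [IsProbabilityMeasure ν]
    (hν : ∀ a : ι → ℝ,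
      Measure.map (fun x => ∑ i, a i * x i) ν = gaussianReal 0 (Real.toNNReal (a ⬝ᵥ Cov *ᵥ a)))
    (hM : M.PosDef) (hCovM : (M - Cov).PosSemidef) {δ : ℝ} (hδ : 0 < δ) :
    ENNReal.ofReal (1 - δ) ≤
      ν {x | ((2 * Fintype.card ι + 4 * log (1 / δ) : ℝ) • M - vecMulVec x x).PosSemidef} := by
  obtain ⟨B, hB, rfl⟩ := hM.exists_isUnit_eq_transpose_mul_self
  set W := B⁻¹
  have hBW : B * W = 1 := mul_nonsing_inv B ((isUnit_iff_isUnit_det B).1 hB)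
  have hWB : W * B = 1 := nonsing_inv_mul B ((isUnit_iff_isUnit_det B).1 hB)
  have hW : (1 - Wᵀ * Cov * W).PosSemidef := by
    have := hCovM.conjTranspose_mul_mul_same W
    rwa [conjTranspose_eq_transpose_of_trivial, Matrix.mul_sub, Matrix.sub_mul,
      show Wᵀ * (Bᵀ * B) * W = (B * W)ᵀ * (B * W) by simp [Matrix.mul_assoc], hBW,
      transpose_one, one_mul] at this
  have hx (x : ι → ℝ) : Bᵀ *ᵥ (Wᵀ *ᵥ x) = x := by
    rw [mulVec_mulVec, ← transpose_mul, hWB, transpose_one, one_mulVec]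
  have := Measure.isProbabilityMeasure_map (μ := ν) (f := (Wᵀ *ᵥ ·)) (by fun_prop)
  calc ENNReal.ofReal (1 - δ)
      ≤ ν.map (Wᵀ *ᵥ ·) {y | y ⬝ᵥ y ≤ 2 * Fintype.card ι + 4 * log (1 / δ)} :=
        le_measure_dotProduct_self_le (lintegral_exp_dotProduct_map_mulVec_le hν hW) hδ
    _ = ν {x | (Wᵀ *ᵥ x) ⬝ᵥ (Wᵀ *ᵥ x) ≤ 2 * Fintype.card ι + 4 * log (1 / δ)} :=
        Measure.map_apply (by fun_prop) (measurableSet_le (by fun_prop) measurable_const)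
    _ ≤ _ := measure_mono fun x hWx => by
        have := posSemidef_smul_transpose_mul_self_sub_vecMulVec B hWx
        rwa [hx] at this

theorem gaussian_vector_outer_product_bound_general (l : ℕ)
    (Cov : Matrix (Fin l) (Fin l) ℝ) (hCov : Cov.PosSemidef)
    (ν : Measure (Fin l → ℝ)) [IsProbabilityMeasure ν]
    (hν : ∀ a : Fin l → ℝ,
      Measure.map (fun x => ∑ i, a i * x i) ν =
        gaussianReal 0 (Real.toNNReal (a ⬝ᵥ Cov.mulVec a)))
    (δ : ℝ) (hδ : 0 < δ) (α₀ : ℝ) (hα₀ : 0 < α₀) :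
    (ENNReal.ofReal (1 - δ) ≤
        ν {x | (((2 * l + 4 * Real.log (1 / δ)) : ℝ) •
            (α₀ • (1 : Matrix (Fin l) (Fin l) ℝ) + Cov) - vecMulVec x x).PosSemidef}) ∧
      (IsUnit Cov.det →
        ENNReal.ofReal (1 - δ) ≤
          ν {x | (((2 * l + 4 * Real.log (1 / δ)) : ℝ) • Cov - vecMulVec x x).PosSemidef}) := by
  have bound (M : Matrix (Fin l) (Fin l) ℝ) (hM : M.PosDef) (hCovM : (M - Cov).PosSemidef) :=
    le_measure_smul_sub_vecMulVec_posSemidef hν hM hCovM hδ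
  simp only [Fintype.card_fin] at bound
  refine ⟨bound _ ((PosDef.one.smul hα₀).add_posSemidef hCov) ?_, fun hdet => bound _ ?_ ?_⟩
  · rw [add_sub_cancel_right]
    exact PosSemidef.one.smul hα₀.le
  · exact hCov.posDef_iff_isUnit.2 ((isUnit_iff_isUnit_det Cov).2 hdet)
  · rw [sub_self]
    exact PosSemidef.zero

/-- if `f` is a centered Gaussian vector in `ℝ^l` with covariance `Σ₀ ⪰ 0`
(characterized by its one-dimensional projections being centered Gaussians with variance
`aᵀΣ₀a`), then for `Σ = α₀I + Σ₀` with `α₀ > 0` and any `δ ∈ (0,1)`, with probability at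
least `1 − δ` we have `ffᵀ ⪯ (2l + 4 log(1/δ))·Σ`; moreover if `Σ₀` is invertible the same
holds with `Σ = Σ₀`. -/
theorem gaussian_vector_outer_product_bound (l : ℕ) (hl : 1 ≤ l)
    (Cov : Matrix (Fin l) (Fin l) ℝ) (hCov : Cov.PosSemidef)
    (ν : Measure (Fin l → ℝ)) [IsProbabilityMeasure ν]
    (hν : ∀ a : Fin l → ℝ,
      Measure.map (fun x => ∑ i, a i * x i) ν =
        gaussianReal 0 (Real.toNNReal (a ⬝ᵥ Cov.mulVec a)))
    (δ : ℝ) (hδ : 0 < δ) (hδ1 : δ < 1) (α₀ : ℝ) (hα₀ : 0 < α₀) :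
    (ENNReal.ofReal (1 - δ) ≤
        ν {x | (((2 * l + 4 * Real.log (1 / δ)) : ℝ) •
            (α₀ • (1 : Matrix (Fin l) (Fin l) ℝ) + Cov) - vecMulVec x x).PosSemidef}) ∧
      (IsUnit Cov.det →
        ENNReal.ofReal (1 - δ) ≤
          ν {x | (((2 * l + 4 * Real.log (1 / δ)) : ℝ) • Cov - vecMulVec x x).PosSemidef}) :=
  gaussian_vector_outer_product_bound_general l Cov hCov ν hν δ hδ α₀ hα₀
end

section
/- Let X be a real-valued Gaussian random variable with arbitrary mean m ∈ ℝ and variance σ² > 0. Then P(|X| ≥ σ) ≥ 3/10. -/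
open MeasureTheory ProbabilityTheory Real Set

/-!
Scaling by `1 / σ` turns `X` into a Gaussian with mean `m / σ` and variance `1`, so
`P(|X| < σ)` is the mass that `N(m / σ, 1)` gives to `(-1, 1)`. Since the standard density is
even and decreasing in `|x|`, shifting it can only lower its integral over a centred interval, so
this mass is at most `P(|Z| < 1) ≈ 0.683` for `Z ~ N(0, 1)`. The bounds
`exp (-t) ≤ 1 - t + t² / 2` and `√(2π) ≥ 103 / 42` give
`P(|Z| < 1) ≤ (42 / 103) (103 / 60) = 7 / 10`.
-/

section AntitoneAbs

variable {f : ℝ → ℝ}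

theorem intervalIntegrable_of_antitone_abs (hf : ∀ x y, |x| ≤ |y| → f y ≤ f x) (a b : ℝ) :
    IntervalIntegrable f volume a b := by
  have hmono : MonotoneOn f (Iic 0) := fun x _ y hy hxy ↦ hf y x (abs_le_abs_of_nonpos hy hxy)
  have hanti : AntitoneOn f (Ici 0) := fun x hx y _ hxy ↦ hf x y (abs_le_abs_of_nonneg hx hxy)
  set R := |a| + |b|
  have hR : 0 ≤ R := by positivity
  have hsymm : IntervalIntegrable f volume (-R) R := by
    refine (hmono.mono ?_).intervalIntegrable.trans (hanti.mono ?_).intervalIntegrable (b := 0)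
    · rw [uIcc_of_le (neg_nonpos.2 hR)]; exact Icc_subset_Iic_self
    · rw [uIcc_of_le hR]; exact Icc_subset_Ici_self
  refine hsymm.mono_set (uIcc_subset_uIcc ?_ ?_) <;> rw [uIcc_of_le (by linarith), mem_Icc]
  · exact abs_le.mp (le_add_of_nonneg_right (abs_nonneg b))
  · exact abs_le.mp (le_add_of_nonneg_left (abs_nonneg a))

theorem integral_comp_sub_le_of_antitone_abs_of_nonneg (hf : ∀ x y, |x| ≤ |y| → f y ≤ f x)
    {r c : ℝ} (hr : 0 ≤ r) (hc : 0 ≤ c) : ∫ u in -r..r, f (u - c) ≤ ∫ u in -r..r, f u := by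
  have hfi := intervalIntegrable_of_antitone_abs hf
  -- the shifted window gains `[-r - c, -r]` and loses `[r - c, r]`; translating the former by
  -- `2 r` onto the latter moves every point closer to `0`
  have hshift : ∫ u in r - c..r, f u = ∫ u in -r - c..-r, f (u + 2 * r) := by
    rw [intervalIntegral.integral_comp_add_right]; ring_nf
  have hmono : ∫ u in -r - c..-r, f u ≤ ∫ u in -r - c..-r, f (u + 2 * r) := by
    refine intervalIntegral.integral_mono_on (by linarith) (hfi _ _) ?_ fun u hu ↦ hf _ _ ?_
    · simpa using (hfi (-r - c + 2 * r) (-r + 2 * r)).comp_add_right (2 * r)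
    · rw [abs_of_nonpos (by linarith [hu.2] : u ≤ 0)]
      exact abs_le.mpr ⟨by linarith [hu.2], by linarith [hu.2]⟩
  rw [intervalIntegral.integral_comp_sub_right,
    ← intervalIntegral.integral_add_adjacent_intervals (hfi _ (-r)) (hfi (-r) (r - c)),
    ← intervalIntegral.integral_add_adjacent_intervals (hfi (-r) (r - c)) (hfi _ r), hshift]
  linarith

theorem integral_comp_sub_le_of_antitone_abs (hf : ∀ x y, |x| ≤ |y| → f y ≤ f x) {r : ℝ}
    (hr : 0 ≤ r) (c : ℝ) : ∫ u in -r..r, f (u - c) ≤ ∫ u in -r..r, f u := by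
  rcases le_total 0 c with hc | hc
  · exact integral_comp_sub_le_of_antitone_abs_of_nonneg hf hr hc
  have heven : ∀ u, f (-u) = f u := fun u ↦
    le_antisymm (hf _ _ (abs_neg u).ge) (hf _ _ (abs_neg u).le)
  calc ∫ u in -r..r, f (u - c) = ∫ u in -r..r, f (-u - c) := by
        rw [intervalIntegral.integral_comp_neg (fun u ↦ f (u - c)), neg_neg]
    _ = ∫ u in -r..r, f (u - -c) := by
        congr 1 with u; rw [← heven]; ring_nf
    _ ≤ ∫ u in -r..r, f u :=
        integral_comp_sub_le_of_antitone_abs_of_nonneg hf hr (neg_nonneg.2 hc)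

end AntitoneAbs

theorem Real.exp_neg_le_one_sub_add_sq_div_two {t : ℝ} (ht : 0 ≤ t) :
    exp (-t) ≤ 1 - t + t ^ 2 / 2 := by
  rw [exp_neg, inv_le_iff_one_le_mul₀' (exp_pos t)]
  -- `(1 + t + t² / 2) (1 - t + t² / 2) = 1 + t⁴ / 4`
  nlinarith [quadratic_le_exp_of_nonneg ht, sq_nonneg (t - 1), pow_two_nonneg (t ^ 2)]

theorem integral_exp_neg_sq_div_two_le : ∫ u in (-1 : ℝ)..1, exp (-u ^ 2 / 2) ≤ 103 / 60 :=
  calc ∫ u in (-1 : ℝ)..1, exp (-u ^ 2 / 2)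
      ≤ ∫ u in (-1 : ℝ)..1, (1 - u ^ 2 / 2 + u ^ 4 / 8) := by
        refine intervalIntegral.integral_mono_on (by norm_num)
          (Continuous.intervalIntegrable (by fun_prop) _ _)
          (Continuous.intervalIntegrable (by fun_prop) _ _) fun u _ ↦ ?_
        have := exp_neg_le_one_sub_add_sq_div_two (t := u ^ 2 / 2) (by positivity)
        rw [neg_div]; linarith
    _ = 103 / 60 := by
        rw [intervalIntegral.integral_add (Continuous.intervalIntegrable (by fun_prop) _ _)
            (Continuous.intervalIntegrable (by fun_prop) _ _),
          intervalIntegral.integral_sub intervalIntegrable_const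
            (Continuous.intervalIntegrable (by fun_prop) _ _)]
        simp only [intervalIntegral.integral_div, integral_pow, intervalIntegral.integral_const]
        norm_num

theorem gaussianReal_Ioo_neg_one_one_le (μ : ℝ) : gaussianReal μ 1 (Ioo (-1) 1) ≤ 7 / 10 := by
  have hdecr : ∀ x y : ℝ, |x| ≤ |y| → exp (-y ^ 2 / 2) ≤ exp (-x ^ 2 / 2) := fun x y hxy ↦
    exp_le_exp.mpr (by nlinarith [sq_le_sq.mpr hxy])
  have hint : ∫ u in (-1 : ℝ)..1, exp (-(u - μ) ^ 2 / 2) ≤ 103 / 60 :=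
    (integral_comp_sub_le_of_antitone_abs hdecr zero_le_one μ).trans
      integral_exp_neg_sq_div_two_le
  have hinv : (√(2 * π))⁻¹ ≤ 42 / 103 :=
    inv_le_of_inv_le₀ (by norm_num) (le_sqrt_of_sq_le (by nlinarith [pi_gt_d2]))
  rw [gaussianReal_apply_eq_integral _ one_ne_zero, ← integral_Ioc_eq_integral_Ioo,
    ← intervalIntegral.integral_of_le (by norm_num)]
  simp only [gaussianPDFReal, NNReal.coe_one, mul_one, intervalIntegral.integral_const_mul]
  calc ENNReal.ofReal ((√(2 * π))⁻¹ * ∫ u in (-1 : ℝ)..1, exp (-(u - μ) ^ 2 / 2))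
      ≤ ENNReal.ofReal ((√(2 * π))⁻¹ * (103 / 60)) := by gcongr
    _ ≤ ENNReal.ofReal (42 / 103 * (103 / 60)) := by gcongr
    _ = 7 / 10 := by
        rw [show (42 / 103 * (103 / 60) : ℝ) = 7 / 10 by norm_num,
          ENNReal.ofReal_div_of_pos (by norm_num)]
        norm_num

theorem gaussianReal_map_div_sqrt {m : ℝ} {v : NNReal} (hv : v ≠ 0) :
    (gaussianReal m v).map (· / √v) = gaussianReal (m / √v) 1 := by
  rw [gaussianReal_map_div_const]
  congr 1
  ext
  simp [sq_sqrt, hv]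

theorem gaussian_abs_ge_stddev_general (m : ℝ) (v : NNReal) :
    (3 / 10 : ENNReal) ≤ gaussianReal m v {x : ℝ | Real.sqrt v ≤ |x|} := by
  rcases eq_or_ne v 0 with rfl | hv
  · simpa [gaussianReal_zero_var] using ENNReal.div_le_of_le_mul (by norm_num)
  have hσ : 0 < √(v : ℝ) := sqrt_pos.mpr (by positivity)
  have hpre : {x : ℝ | √v ≤ |x|} = (· / √v) ⁻¹' (Ioo (-1) 1)ᶜ := by
    ext x
    rw [mem_ofPred_eq, mem_preimage, mem_compl_iff, mem_Ioo, ← abs_lt, abs_div, abs_of_pos hσ,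
      div_lt_one hσ, not_lt]
  rw [hpre, ← Measure.map_apply (by fun_prop) measurableSet_Ioo.compl,
    gaussianReal_map_div_sqrt hv, prob_compl_eq_one_sub measurableSet_Ioo]
  calc (3 / 10 : ENNReal) = 1 - 7 / 10 := by
        refine ENNReal.eq_sub_of_add_eq (ENNReal.div_ne_top (by norm_num) (by norm_num)) ?_
        rw [ENNReal.div_add_div_same, ENNReal.div_eq_one_iff] <;> norm_num
    _ ≤ _ := tsub_le_tsub_left (gaussianReal_Ioo_neg_one_one_le _) 1

/-- for a real Gaussian random variable with mean `m` and variance `σ² > 0`,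
`P(|X| ≥ σ) ≥ 3/10`. -/
theorem gaussian_abs_ge_stddev (m : ℝ) (v : NNReal) (hv : 0 < v) :
    (3 / 10 : ENNReal) ≤ gaussianReal m v {x : ℝ | Real.sqrt v ≤ |x|} :=
  gaussian_abs_ge_stddev_general m v
end

section
/- Let c₀ = max(‖Q‖₂, ‖R‖₂) / min(σ_min(Q), σ_min(R)), where σ_min denotes the smallest eigenvalue. Suppose integers s' ≥ 1 and t ≥ 1 satisfy both t·Ω_{s'}(A; ψ) − Ω_{t+1}(A; ψ) ⪰ 0 and t·Σ_{j=1}^{s'−1} ψⱼψⱼᵀ − Σ_{j=1}^{t} ψⱼψⱼᵀ ⪰ 0 in the Loewner order. Then t·Γ_{s'} − (1/c₀)·Γ_{t+1} ⪰ 0. -/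
open Matrix

/-- The operator 2-norm of a real matrix, i.e. the norm of the induced linear map
between Euclidean spaces. -/
noncomputable def opNorm {α β : Type*} [Fintype α] [Fintype β] [DecidableEq β]
    (M : Matrix α β ℝ) : ℝ :=
  ‖LinearMap.toContinuousLinearMap (Matrix.toEuclideanLin M)‖

/-!
Put `μ = min(q_min, r_min)`, `M = max(‖Q‖₂, ‖R‖₂)`, and let `G_τ = Σ_{j ≤ τ} (T_j T_jᵀ + ψ_j^{(m)} ψ_j^{(m)ᵀ})`
be `Γ_{τ+1}` with `Q` and `R` replaced by identities. Since `μ I ⪯ Q, R ⪯ M I` in the Loewner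
order, `μ G_{s'-1} ⪯ Γ_{s'}` and `Γ_{t+1} ⪯ M G_t`. Because `T_j = (I_k ⊗ C) S_j` and
`ψ_j^{(m)} ψ_j^{(m)ᵀ} = ψ_j ψ_jᵀ ⊗ I_m`, the two hypotheses transfer, by congruence and by a
Kronecker product with `I_m`, to `G_t ⪯ t G_{s'-1}`. Chaining,
`(μ / M) Γ_{t+1} ⪯ μ G_t ⪯ t μ G_{s'-1} ⪯ t Γ_{s'}`, and `1 / c₀ = μ / M`.
-/

open scoped MatrixOrder Matrix.Norms.L2Operator Kronecker

lemma smul_div_le_smul_of_sandwich {E : Type*} [AddCommGroup E] [PartialOrder E] [Module ℝ E]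
    [PosSMulMono ℝ E] {Γ₁ Γ₂ G₁ G₂ : E} {μ M t : ℝ} (hμ : 0 ≤ μ) (hM : 0 < M) (ht : 0 ≤ t)
    (h₁ : μ • G₁ ≤ Γ₁) (h₂ : Γ₂ ≤ M • G₂) (hG : G₂ ≤ t • G₁) : (μ / M) • Γ₂ ≤ t • Γ₁ :=
  calc (μ / M) • Γ₂ ≤ (μ / M) • (M • G₂) := smul_le_smul_of_nonneg_left h₂ (by positivity)
    _ = μ • G₂ := by rw [smul_smul, div_mul_cancel₀ _ hM.ne']
    _ ≤ μ • (t • G₁) := smul_le_smul_of_nonneg_left hG hμ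
    _ = t • (μ • G₁) := smul_comm _ _ _
    _ ≤ t • Γ₁ := smul_le_smul_of_nonneg_left h₁ ht

namespace Matrix

lemma opNorm_eq_l2_opNorm {α β : Type*} [Fintype α] [Fintype β] [DecidableEq β]
    (M : Matrix α β ℝ) : opNorm M = ‖M‖ :=
  rfl

section Spectrum

variable {n : Type*} [Fintype n] [DecidableEq n]

lemma le_l2_opNorm_of_mem_spectrum {M : Matrix n n ℝ} {x : ℝ} (hx : x ∈ spectrum ℝ M) :
    x ≤ ‖M‖ := by
  have : Nontrivial (Matrix n n ℝ) := by
    by_contra h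
    rw [not_nontrivial_iff_subsingleton] at h
    simp [spectrum.of_subsingleton] at hx
  exact (Real.le_norm_self x).trans (spectrum.norm_le_norm_of_mem hx)

lemma IsHermitian.smul_one_le_of_le_spectrum {M : Matrix n n ℝ} (hM : M.IsHermitian) {a : ℝ}
    (h : ∀ x ∈ spectrum ℝ M, a ≤ x) : a • 1 ≤ M := by
  simpa [Algebra.algebraMap_eq_smul_one] using algebraMap_le_of_le_spectrum h hM.isSelfAdjoint

lemma IsHermitian.le_smul_one_of_l2_opNorm_le {M : Matrix n n ℝ} (hM : M.IsHermitian) {a : ℝ}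
    (h : ‖M‖ ≤ a) : M ≤ a • 1 := by
  simpa [Algebra.algebraMap_eq_smul_one] using
    le_algebraMap_of_spectrum_le (fun x hx => (le_l2_opNorm_of_mem_spectrum hx).trans h)
      hM.isSelfAdjoint

end Spectrum

section Congruence

variable {ι α β γ : Type*} [Fintype α] [Fintype β]

lemma mul_mul_transpose_mono (E : Matrix α β ℝ) {X Y : Matrix β β ℝ} (h : X ≤ Y) :
    E * X * Eᵀ ≤ E * Y * Eᵀ := by
  rw [le_iff, ← Matrix.sub_mul, ← Matrix.mul_sub, ← conjTranspose_eq_transpose_of_trivial]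
  exact (le_iff.mp h).mul_mul_conjTranspose_same E

lemma sum_mul_mul_transpose_mono (s : Finset ι) (T : ι → Matrix α β ℝ) {X Y : Matrix β β ℝ}
    (h : X ≤ Y) : ∑ j ∈ s, T j * X * (T j)ᵀ ≤ ∑ j ∈ s, T j * Y * (T j)ᵀ :=
  Finset.sum_le_sum fun j _ => mul_mul_transpose_mono (T j) h

omit [Fintype α] in
lemma mul_sum_mul_transpose [Fintype γ] (E : Matrix α β ℝ) (s : Finset ι)
    (S : ι → Matrix β γ ℝ) :
    E * (∑ j ∈ s, S j * (S j)ᵀ) * Eᵀ = ∑ j ∈ s, (E * S j) * (E * S j)ᵀ := by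
  simp [Matrix.mul_sum, Matrix.sum_mul, Matrix.transpose_mul, Matrix.mul_assoc]

lemma sum_mul_transpose_le_smul_of_eq_mul [Fintype γ] (E : Matrix α β ℝ)
    {S : ι → Matrix β γ ℝ} {T : ι → Matrix α γ ℝ} (hT : ∀ j, T j = E * S j)
    {s₁ s₂ : Finset ι} {c : ℝ}
    (h : ∑ j ∈ s₂, S j * (S j)ᵀ ≤ c • ∑ j ∈ s₁, S j * (S j)ᵀ) :
    ∑ j ∈ s₂, T j * (T j)ᵀ ≤ c • ∑ j ∈ s₁, T j * (T j)ᵀ := by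
  have := mul_mul_transpose_mono E h
  rw [Matrix.mul_smul, Matrix.smul_mul, mul_sum_mul_transpose, mul_sum_mul_transpose] at this
  simpa only [hT] using this

variable [DecidableEq β]

omit [Fintype α] in
lemma sum_mul_smul_one_mul_transpose (s : Finset ι) (T : ι → Matrix α β ℝ) (c : ℝ) :
    ∑ j ∈ s, T j * (c • (1 : Matrix β β ℝ)) * (T j)ᵀ = c • ∑ j ∈ s, T j * (T j)ᵀ := by
  simp only [Matrix.mul_smul, Matrix.smul_mul, Matrix.mul_one, Finset.smul_sum]

lemma smul_sum_mul_transpose_le (s : Finset ι) (T : ι → Matrix α β ℝ) {P : Matrix β β ℝ} {c : ℝ}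
    (h : c • 1 ≤ P) : c • ∑ j ∈ s, T j * (T j)ᵀ ≤ ∑ j ∈ s, T j * P * (T j)ᵀ :=
  sum_mul_smul_one_mul_transpose s T c ▸ sum_mul_mul_transpose_mono s T h

lemma sum_mul_mul_transpose_le_smul (s : Finset ι) (T : ι → Matrix α β ℝ) {P : Matrix β β ℝ}
    {c : ℝ} (h : P ≤ c • 1) : ∑ j ∈ s, T j * P * (T j)ᵀ ≤ c • ∑ j ∈ s, T j * (T j)ᵀ :=
  sum_mul_smul_one_mul_transpose s T c ▸ sum_mul_mul_transpose_mono s T h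

end Congruence

section Kronecker

variable {ι κ l : Type*}

lemma sum_kronecker {m p : Type*} (s : Finset ι) (X : ι → Matrix κ l ℝ) (B : Matrix m p ℝ) :
    (∑ j ∈ s, X j) ⊗ₖ B = ∑ j ∈ s, X j ⊗ₖ B := by
  ext
  simp [sum_apply, Finset.sum_mul]

variable {n : Type*} [Fintype n] [DecidableEq n]

/-- `v ⊗ I_n`; the statement's `ψᵢ^{(d)}` and `ψᵢ^{(m)}` are `vecKroneckerOne (ψ i)`. -/
def vecKroneckerOne (v : κ → ℝ) : Matrix (κ × n) n ℝ :=
  of fun p c => v p.1 * if p.2 = c then 1 else 0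

lemma one_kronecker_mul_vecKroneckerOne [Fintype κ] [DecidableEq κ] [Fintype l] [DecidableEq l]
    (C : Matrix l n ℝ) (v : κ → ℝ) :
    ((1 : Matrix κ κ ℝ) ⊗ₖ C) * vecKroneckerOne (n := n) v = vecKroneckerOne (n := l) v * C := by
  ext ⟨a, b⟩ c
  simp [vecKroneckerOne, mul_apply, one_apply, Fintype.sum_prod_type, mul_comm]

lemma vecKroneckerOne_mul_transpose (v : κ → ℝ) :
    vecKroneckerOne (n := n) v * (vecKroneckerOne (n := n) v)ᵀ =
      vecMulVec v v ⊗ₖ (1 : Matrix n n ℝ) := by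
  ext ⟨a, b⟩ ⟨a', b'⟩
  rw [mul_apply]
  simp [vecKroneckerOne, one_apply, vecMulVec_apply]

lemma kronecker_one_mono [Fintype κ] {X Y : Matrix κ κ ℝ} (h : X ≤ Y) :
    X ⊗ₖ (1 : Matrix n n ℝ) ≤ Y ⊗ₖ 1 := by
  have hsub : Y ⊗ₖ (1 : Matrix n n ℝ) - X ⊗ₖ 1 = (Y - X) ⊗ₖ 1 := by
    ext; simp [sub_mul]
  rw [le_iff, hsub]
  exact (le_iff.mp h).kronecker PosSemidef.one

lemma sum_vecKroneckerOne_mul_transpose_le_smul [Fintype κ] {v : ι → κ → ℝ}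
    {s₁ s₂ : Finset ι} {c : ℝ}
    (h : ∑ j ∈ s₂, vecMulVec (v j) (v j) ≤ c • ∑ j ∈ s₁, vecMulVec (v j) (v j)) :
    ∑ j ∈ s₂, vecKroneckerOne (n := n) (v j) * (vecKroneckerOne (n := n) (v j))ᵀ ≤
      c • ∑ j ∈ s₁, vecKroneckerOne (n := n) (v j) * (vecKroneckerOne (n := n) (v j))ᵀ := by
  simpa only [vecKroneckerOne_mul_transpose, ← sum_kronecker, smul_kronecker] using
    kronecker_one_mono (n := n) h

end Kronecker

end Matrix

theorem filter_quadratic_condition_general (k d m : ℕ)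
    (ψ : ℕ → (Fin k → ℝ))
    (A : Matrix (Fin d) (Fin d) ℝ) (C : Matrix (Fin m) (Fin d) ℝ)
    (Q : Matrix (Fin d) (Fin d) ℝ) (R : Matrix (Fin m) (Fin m) ℝ)
    (hQ : Q.PosDef) (hR : R.PosDef)
    (ψd : ℕ → Matrix (Fin k × Fin d) (Fin d) ℝ)
    (hψd : ∀ (i : ℕ) (a : Fin k) (b c : Fin d),
      ψd i (a, b) c = ψ i a * (if b = c then 1 else 0))
    (ψm : ℕ → Matrix (Fin k × Fin m) (Fin m) ℝ)
    (hψm : ∀ (i : ℕ) (a : Fin k) (b c : Fin m),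
      ψm i (a, b) c = ψ i a * (if b = c then 1 else 0))
    (S : ℕ → Matrix (Fin k × Fin d) (Fin d) ℝ)
    (hS : ∀ j : ℕ, S j = ∑ r ∈ Finset.Icc 1 j, ψd r * A ^ (j - r))
    (Ωf : ℕ → Matrix (Fin k × Fin d) (Fin k × Fin d) ℝ)
    (hΩf : ∀ t' : ℕ, Ωf t' = ∑ j ∈ Finset.Icc 1 (t' - 1), S j * (S j)ᵀ)
    (Tm : ℕ → Matrix (Fin k × Fin m) (Fin d) ℝ)
    (hTm : ∀ j : ℕ, Tm j = ∑ r ∈ Finset.Icc 1 j, ψm r * C * A ^ (j - r))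
    (Γ : ℕ → Matrix (Fin k × Fin m) (Fin k × Fin m) ℝ)
    (hΓ : ∀ t' : ℕ, Γ t' =
      (∑ j ∈ Finset.Icc 1 (t' - 1), Tm j * Q * (Tm j)ᵀ) +
        ∑ j ∈ Finset.Icc 1 (t' - 1), ψm j * R * (ψm j)ᵀ)
    (qmin rmin c₀ : ℝ)
    (hqmin : IsLeast (spectrum ℝ Q) qmin) (hrmin : IsLeast (spectrum ℝ R) rmin)
    (hc₀ : c₀ = max (opNorm Q) (opNorm R) / min qmin rmin)
    (s' t : ℕ)
    (hΩcond : ((t : ℝ) • Ωf s' - Ωf (t + 1)).PosSemidef)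
    (hψcond : ((t : ℝ) • (∑ j ∈ Finset.Icc 1 (s' - 1), vecMulVec (ψ j) (ψ j)) -
        ∑ j ∈ Finset.Icc 1 t, vecMulVec (ψ j) (ψ j)).PosSemidef) :
    ((t : ℝ) • Γ s' - (1 / c₀) • Γ (t + 1)).PosSemidef := by
  have hμ : 0 < min qmin rmin := lt_min (hQ.isStrictlyPositive.spectrum_pos hqmin.1)
    (hR.isStrictlyPositive.spectrum_pos hrmin.1)
  have hM : 0 < max ‖Q‖ ‖R‖ := hμ.trans_le <|
    (min_le_left _ _).trans <| (le_l2_opNorm_of_mem_spectrum hqmin.1).trans (le_max_left _ _)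
  have hψd_eq : ψd = fun i => vecKroneckerOne (ψ i) := by ext i ⟨a, b⟩ c; exact hψd i a b c
  have hψm_eq : ψm = fun i => vecKroneckerOne (ψ i) := by ext i ⟨a, b⟩ c; exact hψm i a b c
  have hTmS : ∀ j, Tm j = ((1 : Matrix (Fin k) (Fin k) ℝ) ⊗ₖ C) * S j := fun j => by
    simp only [hTm, hS, Matrix.mul_sum, ← Matrix.mul_assoc, hψd_eq, hψm_eq,
      one_kronecker_mul_vecKroneckerOne]
  have hG : (∑ j ∈ Finset.Icc 1 t, Tm j * (Tm j)ᵀ) + ∑ j ∈ Finset.Icc 1 t, ψm j * (ψm j)ᵀ ≤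
      (t : ℝ) • ((∑ j ∈ Finset.Icc 1 (s' - 1), Tm j * (Tm j)ᵀ) +
        ∑ j ∈ Finset.Icc 1 (s' - 1), ψm j * (ψm j)ᵀ) := by
    rw [smul_add]
    refine add_le_add (sum_mul_transpose_le_smul_of_eq_mul _ hTmS ?_) ?_
    · simpa only [hΩf, Nat.add_sub_cancel] using le_iff.mpr hΩcond
    · simpa only [hψm_eq] using sum_vecKroneckerOne_mul_transpose_le_smul (le_iff.mpr hψcond)
  rw [← le_iff, hc₀, one_div_div, opNorm_eq_l2_opNorm, opNorm_eq_l2_opNorm]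
  refine smul_div_le_smul_of_sandwich hμ.le hM t.cast_nonneg ?_ ?_ hG
  · rw [hΓ, smul_add]
    exact add_le_add
      (smul_sum_mul_transpose_le _ _ (hQ.isHermitian.smul_one_le_of_le_spectrum
        fun x hx => (min_le_left _ _).trans (hqmin.2 hx)))
      (smul_sum_mul_transpose_le _ _ (hR.isHermitian.smul_one_le_of_le_spectrum
        fun x hx => (min_le_right _ _).trans (hrmin.2 hx)))
  · rw [hΓ, Nat.add_sub_cancel, smul_add]
    exact add_le_add
      (sum_mul_mul_transpose_le_smul _ _ (hQ.isHermitian.le_smul_one_of_l2_opNorm_le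
        (le_max_left _ _)))
      (sum_mul_mul_transpose_le_smul _ _ (hR.isHermitian.le_smul_one_of_l2_opNorm_le
        (le_max_right _ _)))

/-- the filter quadratic condition
`t·Ω_{s'}(A;ψ) − Ω_{t+1}(A;ψ) ⪰ 0` together with
`t·Σ_{j=1}^{s'−1} ψⱼψⱼᵀ − Σ_{j=1}^{t} ψⱼψⱼᵀ ⪰ 0` implies
`t·Γ_{s'} − (1/c₀)·Γ_{t+1} ⪰ 0`, where
`c₀ = max(‖Q‖₂,‖R‖₂)/min(σ_min(Q),σ_min(R))`. -/
theorem filter_quadratic_condition (k d m : ℕ) (hk : 1 ≤ k) (hd : 1 ≤ d) (hm : 1 ≤ m)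
    (ψ : ℕ → (Fin k → ℝ))
    (A : Matrix (Fin d) (Fin d) ℝ) (C : Matrix (Fin m) (Fin d) ℝ)
    (Q : Matrix (Fin d) (Fin d) ℝ) (R : Matrix (Fin m) (Fin m) ℝ)
    (hQ : Q.PosDef) (hR : R.PosDef)
    (ψd : ℕ → Matrix (Fin k × Fin d) (Fin d) ℝ)
    (hψd : ∀ (i : ℕ) (a : Fin k) (b c : Fin d),
      ψd i (a, b) c = ψ i a * (if b = c then 1 else 0))
    (ψm : ℕ → Matrix (Fin k × Fin m) (Fin m) ℝ)
    (hψm : ∀ (i : ℕ) (a : Fin k) (b c : Fin m),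
      ψm i (a, b) c = ψ i a * (if b = c then 1 else 0))
    (S : ℕ → Matrix (Fin k × Fin d) (Fin d) ℝ)
    (hS : ∀ j : ℕ, S j = ∑ r ∈ Finset.Icc 1 j, ψd r * A ^ (j - r))
    (Ωf : ℕ → Matrix (Fin k × Fin d) (Fin k × Fin d) ℝ)
    (hΩf : ∀ t' : ℕ, Ωf t' = ∑ j ∈ Finset.Icc 1 (t' - 1), S j * (S j)ᵀ)
    (Tm : ℕ → Matrix (Fin k × Fin m) (Fin d) ℝ)
    (hTm : ∀ j : ℕ, Tm j = ∑ r ∈ Finset.Icc 1 j, ψm r * C * A ^ (j - r))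
    (Γ : ℕ → Matrix (Fin k × Fin m) (Fin k × Fin m) ℝ)
    (hΓ : ∀ t' : ℕ, Γ t' =
      (∑ j ∈ Finset.Icc 1 (t' - 1), Tm j * Q * (Tm j)ᵀ) +
        ∑ j ∈ Finset.Icc 1 (t' - 1), ψm j * R * (ψm j)ᵀ)
    (qmin rmin c₀ : ℝ)
    (hqmin : IsLeast (spectrum ℝ Q) qmin) (hrmin : IsLeast (spectrum ℝ R) rmin)
    (hc₀ : c₀ = max (opNorm Q) (opNorm R) / min qmin rmin)
    (s' t : ℕ) (hs' : 1 ≤ s') (ht : 1 ≤ t)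
    (hΩcond : ((t : ℝ) • Ωf s' - Ωf (t + 1)).PosSemidef)
    (hψcond : ((t : ℝ) • (∑ j ∈ Finset.Icc 1 (s' - 1), vecMulVec (ψ j) (ψ j)) -
        ∑ j ∈ Finset.Icc 1 t, vecMulVec (ψ j) (ψ j)).PosSemidef) :
    ((t : ℝ) • Γ s' - (1 / c₀) • Γ (t + 1)).PosSemidef :=
  filter_quadratic_condition_general k d m ψ A C Q R hQ hR ψd hψd ψm hψm S hS Ωf hΩf Tm hTm Γ hΓ
    qmin rmin c₀ hqmin hrmin hc₀ s' t hΩcond hψcond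
end

section
/- Let Z₀ be an l×l positive definite real matrix, let f₁, …, f_t ∈ ℝ^l, and define Z_i = Z₀ + Σ_{j=1}^{i} fⱼfⱼᵀ for 0 ≤ i ≤ t. Then Σ_{i=1}^{t} fᵢᵀ Zᵢ^{−1} fᵢ ≤ log( det(Z_t) / det(Z₀) ), where log is the natural logarithm. -/
open Matrix

/-!
Adding the rank-one term `u uᵀ` to a positive definite `A` gives `B = A + u uᵀ` with
`uᵀ B⁻¹ u = 1 - det A / det B` (matrix determinant lemma applied to `A = B - u uᵀ`), and
`1 - x⁻¹ ≤ log x` bounds this by `log (det B / det A)`. Summing over the rank-one updates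
`Z_{i+1} = Z_i + f_{i+1} f_{i+1}ᵀ`, the logarithms telescope to `log (det Z_t / det Z₀)`.
-/

namespace Matrix

variable {m α : Type*} [Fintype m] [DecidableEq m]

theorem det_add_vecMulVec [CommRing α] {A : Matrix m m α} (hA : IsUnit A.det) (u v : m → α) :
    (A + vecMulVec u v).det = A.det * (1 + v ⬝ᵥ A⁻¹ *ᵥ u) := by
  rw [vecMulVec_eq Unit, det_add_replicateCol_mul_replicateRow hA, det_unique (n := Unit),
    Matrix.mul_assoc, ← replicateCol_mulVec]
  rfl

theorem dotProduct_inv_add_vecMulVec_mulVec [Field α] {A : Matrix m m α} {u v : m → α}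
    (h : IsUnit (A + vecMulVec u v).det) :
    v ⬝ᵥ (A + vecMulVec u v)⁻¹ *ᵥ u = 1 - A.det / (A + vecMulVec u v).det := by
  have hA : A.det = (A + vecMulVec u v).det * (1 - v ⬝ᵥ (A + vecMulVec u v)⁻¹ *ᵥ u) := by
    simpa [mulVec_neg, ← sub_eq_add_neg] using det_add_vecMulVec h (-u) v
  rw [hA, mul_div_cancel_left₀ _ h.ne_zero]
  ring

theorem dotProduct_inv_add_vecMulVec_self_mulVec_le_log {A : Matrix m m ℝ} (hA : A.PosDef)
    (u : m → ℝ) :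
    u ⬝ᵥ (A + vecMulVec u u)⁻¹ *ᵥ u ≤ Real.log ((A + vecMulVec u u).det / A.det) := by
  have hB : (A + vecMulVec u u).PosDef :=
    hA.add_posSemidef (by simpa using posSemidef_vecMulVec_self_star u)
  rw [dotProduct_inv_add_vecMulVec_mulVec hB.det_pos.ne'.isUnit, ← inv_div]
  exact Real.one_sub_inv_le_log_of_pos (div_pos hB.det_pos hA.det_pos)

end Matrix

theorem sum_Icc_le_log_div {d a : ℕ → ℝ} (hd : ∀ i, 0 < d i)
    (h : ∀ i, a (i + 1) ≤ Real.log (d (i + 1) / d i)) (t : ℕ) :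
    ∑ i ∈ Finset.Icc 1 t, a i ≤ Real.log (d t / d 0) := by
  induction t with
  | zero => simp [(hd 0).ne']
  | succ t ih =>
    rw [Finset.sum_Icc_succ_top (by omega)]
    have := h t
    rw [Real.log_div (hd _).ne' (hd _).ne'] at *
    linarith

/-- with `Z_i = Z₀ + Σ_{j≤i} fⱼfⱼᵀ` and `Z₀ ≻ 0`,
`Σ_{i=1}^t fᵢᵀ Zᵢ⁻¹ fᵢ ≤ log(det Z_t / det Z₀)`. -/
theorem sum_quadform_inv_le_log_det_ratio (l t : ℕ)
    (Z₀ : Matrix (Fin l) (Fin l) ℝ) (hZ₀ : Z₀.PosDef)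
    (f : ℕ → (Fin l → ℝ))
    (Z : ℕ → Matrix (Fin l) (Fin l) ℝ)
    (hZ : ∀ i, Z i = Z₀ + ∑ j ∈ Finset.Icc 1 i, Matrix.vecMulVec (f j) (f j)) :
    ∑ i ∈ Finset.Icc 1 t, f i ⬝ᵥ ((Z i)⁻¹).mulVec (f i) ≤
      Real.log ((Z t).det / Z₀.det) := by
  have hZ_zero : Z 0 = Z₀ := by simp [hZ]
  have hZ_succ (i : ℕ) : Z (i + 1) = Z i + vecMulVec (f (i + 1)) (f (i + 1)) := by
    rw [hZ, hZ, Finset.sum_Icc_succ_top (by omega), add_assoc]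
  have hZ_posDef (i : ℕ) : (Z i).PosDef := by
    induction i with
    | zero => rwa [hZ_zero]
    | succ i ih =>
      rw [hZ_succ]
      exact ih.add_posSemidef (by simpa using posSemidef_vecMulVec_self_star (f (i + 1)))
  rw [← hZ_zero]
  refine sum_Icc_le_log_div (fun i => (hZ_posDef i).det_pos) (fun i => ?_) t
  rw [hZ_succ]
  exact dotProduct_inv_add_vecMulVec_self_mulVec_le_log (hZ_posDef i) _
end

section
/- Let Z₀ be an l×l positive definite real matrix, let f₁, …, f_T ∈ ℝ^l, and define Z_i = Z₀ + Σ_{j=1}^{i} fⱼfⱼᵀ for 0 ≤ i ≤ T. Then Σ_{t=1}^{T} ( f_tᵀ Z_{t−1}^{−1} f_t ) / ( 1 + f_tᵀ Z_{t−1}^{−1} f_t ) ≤ log( det(Z_T) / det(Z₀) ), where log is the natural logarithm. -/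
/-!
Adding the rank-one term `f fᵀ` to a positive definite `Z` multiplies `det Z` by `1 + q`, where
`q = fᵀ Z⁻¹ f ≥ 0` (matrix determinant lemma). Hence each summand `q / (1 + q)` is at most
`log (1 + q) = log det Z_t - log det Z_{t-1}` (from `log y ≥ 1 - 1/y`), and the sum telescopes.
-/

open Matrix

theorem Finset.sum_Icc_one_sub_pred {M : Type*} [AddCommGroup M] (g : ℕ → M) (n : ℕ) :
    ∑ i ∈ Finset.Icc 1 n, (g i - g (i - 1)) = g n - g 0 := by
  induction n with
  | zero => simp
  | succ n ih =>
    rw [Finset.sum_Icc_succ_top (by omega), ih, Nat.add_sub_cancel]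
    abel

theorem Real.div_one_add_le_log_one_add {x : ℝ} (hx : -1 < x) :
    x / (1 + x) ≤ Real.log (1 + x) := by
  have hpos : 0 < 1 + x := by linarith
  calc x / (1 + x) = 1 - (1 + x)⁻¹ := by field_simp; ring
    _ ≤ Real.log (1 + x) := Real.one_sub_inv_le_log_of_pos hpos

theorem Matrix.det_add_vecMulVec_s13 {m α : Type*} [Fintype m] [DecidableEq m] [CommRing α]
    {A : Matrix m m α} (hA : IsUnit A.det) (u v : m → α) :
    (A + vecMulVec u v).det = A.det * (1 + v ⬝ᵥ A⁻¹ *ᵥ u) := by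
  rw [vecMulVec_eq Unit, det_add_replicateCol_mul_replicateRow hA, Matrix.mul_assoc,
    ← replicateCol_mulVec, replicateRow_mul_replicateCol, det_unique (1 + of _)]
  rfl

namespace Matrix.PosDef

variable {m : Type*} [Fintype m] {A : Matrix m m ℝ}

theorem add_vecMulVec_self (hA : A.PosDef) (f : m → ℝ) : (A + vecMulVec f f).PosDef :=
  hA.add_posSemidef (by simpa using posSemidef_vecMulVec_self_star f)

theorem inv_quadForm_div_le_log_det_add_vecMulVec_self_sub [DecidableEq m] (hA : A.PosDef)
    (f : m → ℝ) :
    (f ⬝ᵥ A⁻¹ *ᵥ f) / (1 + f ⬝ᵥ A⁻¹ *ᵥ f) ≤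
      Real.log (A + vecMulVec f f).det - Real.log A.det := by
  have hq : 0 ≤ f ⬝ᵥ A⁻¹ *ᵥ f := by
    simpa using hA.inv.posSemidef.dotProduct_mulVec_nonneg f
  rw [det_add_vecMulVec_s13 (isUnit_iff_ne_zero.2 hA.det_pos.ne'),
    Real.log_mul hA.det_pos.ne' (by positivity), add_sub_cancel_left]
  exact Real.div_one_add_le_log_one_add (by linarith)

end Matrix.PosDef

/-- with `Z_i = Z₀ + Σ_{j≤i} fⱼfⱼᵀ` and `Z₀ ≻ 0`,
`Σ_{t=1}^T (f_tᵀ Z_{t−1}⁻¹ f_t)/(1 + f_tᵀ Z_{t−1}⁻¹ f_t) ≤ log(det Z_T / det Z₀)`. -/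
theorem sum_quadform_div_one_add_le_log_det_ratio (l T : ℕ)
    (Z₀ : Matrix (Fin l) (Fin l) ℝ) (hZ₀ : Z₀.PosDef)
    (f : ℕ → (Fin l → ℝ))
    (Z : ℕ → Matrix (Fin l) (Fin l) ℝ)
    (hZ : ∀ i, Z i = Z₀ + ∑ j ∈ Finset.Icc 1 i, Matrix.vecMulVec (f j) (f j)) :
    ∑ t ∈ Finset.Icc 1 T,
        (f t ⬝ᵥ ((Z (t - 1))⁻¹).mulVec (f t)) / (1 + f t ⬝ᵥ ((Z (t - 1))⁻¹).mulVec (f t)) ≤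
      Real.log ((Z T).det / Z₀.det) := by
  have hZ_zero : Z 0 = Z₀ := by simp [hZ 0]
  have hZ_succ (t : ℕ) : Z (t + 1) = Z t + vecMulVec (f (t + 1)) (f (t + 1)) := by
    rw [hZ, hZ, Finset.sum_Icc_succ_top (by omega), add_assoc]
  have hZ_pos (t : ℕ) : (Z t).PosDef := by
    induction t with
    | zero => rwa [hZ_zero]
    | succ t ih => rw [hZ_succ]; exact ih.add_vecMulVec_self _
  calc _ ≤ ∑ t ∈ Finset.Icc 1 T, (Real.log (Z t).det - Real.log (Z (t - 1)).det) := by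
        refine Finset.sum_le_sum fun t ht => ?_
        obtain ⟨s, rfl⟩ : ∃ s, t = s + 1 := ⟨t - 1, by grind⟩
        rw [Nat.add_sub_cancel, hZ_succ]
        exact (hZ_pos s).inv_quadForm_div_le_log_det_add_vecMulVec_self_sub _
    _ = Real.log ((Z T).det / Z₀.det) := by
        rw [Finset.sum_Icc_one_sub_pred (fun t => Real.log (Z t).det), hZ_zero,
          Real.log_div (hZ_pos T).det_pos.ne' hZ₀.det_pos.ne']
end
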